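/- For c ∈ ℂ with Re c > 0 and m ∈ ℕ, the function f_m(x) = H_m(√c x)·exp(-c x²/2), where H_m is the m-th Hermite polynomial and √c is the principal square root, satisfies -f_m'' + c²x²f_m = c(2m+1)f_m and lies in L²(ℝ). Hence c(2m+1) is an eigenvalue of the non-self-adjoint operator -d²/dx² + c²x². -/

import Mathlib

open MeasureTheory Complex Polynomial

private lemma memL2_gauss_poly (c : ℂ) (hc : 0 < c.re) (a : ℂ) (P : Polynomial ℂ) :
    MemLp (fun x : ℝ => P.eval (a * x) * Complex.exp (-c * (x:ℂ)^2 / 2)) 2 volume := by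
  induction P using Polynomial.induction_on' with
  | add p q hp hq =>
      have h := hp.add hq
      have heq : (fun x : ℝ => (p+q).eval (a*x) * Complex.exp (-c*(x:ℂ)^2/2))
          = (fun x : ℝ => p.eval (a*x) * Complex.exp (-c*(x:ℂ)^2/2))
            + (fun x : ℝ => q.eval (a*x) * Complex.exp (-c*(x:ℂ)^2/2)) := by
        funext x; simp [add_mul]
      rw [heq]; exact h
  | monomial n k =>
      have hcont : Continuous (fun x : ℝ => (monomial n k).eval (a*x) * Complex.exp (-c*(x:ℂ)^2/2)) := by
        fun_prop
      rw [memLp_two_iff_integrable_sq_norm hcont.aestronglyMeasurable]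
      have heq : (fun x : ℝ => ‖(monomial n k).eval (a*x) * Complex.exp (-c*(x:ℂ)^2/2)‖^2)
          = fun x : ℝ => (‖k‖^2 * ‖a‖^(2*n)) * (x ^ (2*n) * Real.exp (-c.re * x^2)) := by
        funext x
        have h1 : -c*(x:ℂ)^2/2 = -(c/2)*(x:ℂ)^2 := by ring
        rw [eval_monomial, h1, norm_mul, norm_cexp_neg_mul_sq, norm_mul, norm_pow, norm_mul]
        have h2 : (c/2).re = c.re/2 := by simp [Complex.div_re, Complex.normSq]
        have h3 : ‖(x:ℂ)‖ = |x| := by simp [Complex.norm_real]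
        have h4 : (Real.exp (-(c.re/2) * x^2))^2 = Real.exp (-c.re * x^2) := by
          rw [← Real.exp_nat_mul]; congr 1; ring
        have h5 : |x| ^ (2*n) = x ^ (2*n) := by rw [pow_mul, _root_.sq_abs, ← pow_mul]
        rw [h2, h3, mul_pow, mul_pow, h4, ← h5]
        ring
      rw [heq]
      have hint : Integrable (fun x : ℝ => x ^ (2*n) * Real.exp (-c.re * x^2)) := by
        have := integrable_rpow_mul_exp_neg_mul_sq hc
          (lt_of_lt_of_le (by norm_num) (Nat.cast_nonneg (2*n)) : (-1:ℝ) < ((2*n : ℕ):ℝ))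
        simpa only [Real.rpow_natCast] using this
      exact hint.const_mul _

/-- for Re c > 0 and the m-th (physicists') Hermite polynomial H_m
(characterised by the Hermite ODE H_m'' - 2XH_m' + 2mH_m = 0 and degree m),
f_m(x) = H_m(√c x) exp(-cx²/2) satisfies -f_m'' + c²x²f_m = c(2m+1)f_m and lies
in L²(ℝ); hence c(2m+1) is an eigenvalue of -d²/dx² + c²x². -/
theorem complex_oscillator_eigenfunctions
    (c : ℂ) (hc : 0 < c.re) (m : ℕ)
    (H : Polynomial ℂ) (hdeg : H.natDegree = m) (hHne : H ≠ 0)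
    (hODE : H.derivative.derivative - Polynomial.C 2 * Polynomial.X * H.derivative
        + Polynomial.C (2 * (m : ℂ)) * H = 0)
    (f : ℝ → ℂ)
    (hf : ∀ x : ℝ, f x = H.eval (c ^ (1/2 : ℂ) * x) * Complex.exp (-c * (x : ℂ) ^ 2 / 2)) :
    MemLp f 2 (volume : Measure ℝ) ∧
    ∀ x : ℝ, -deriv (deriv f) x + c ^ 2 * (x : ℂ) ^ 2 * f x = c * (2 * m + 1) * f x := by
  set a : ℂ := c ^ (1/2 : ℂ) with ha_def
  have ha : a ^ 2 = c := by
    have : (1/2 : ℂ) = ((2:ℕ) : ℂ)⁻¹ := by norm_num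
    rw [ha_def, this]
    exact_mod_cast Complex.cpow_nat_inv_pow c (by norm_num)
  have hfe : f = fun x : ℝ => H.eval (a * x) * Complex.exp (-c * (x:ℂ)^2 / 2) :=
    funext hf
  constructor
  · rw [hfe]; exact memL2_gauss_poly c hc a H
  · -- derivative computation
    set e1 : ℂ → ℂ := fun z =>
      (a * H.derivative.eval (a*z) - c * z * H.eval (a*z)) * Complex.exp (-c * z^2 / 2) with he1_def
    set e2 : ℂ → ℂ := fun z =>
      (a^2 * H.derivative.derivative.eval (a*z) - c * H.eval (a*z)
        - 2 * a * c * z * H.derivative.eval (a*z) + c^2 * z^2 * H.eval (a*z))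
        * Complex.exp (-c * z^2 / 2) with he2_def
    have hlin : ∀ z : ℂ, HasDerivAt (fun w : ℂ => a * w) a z := by
      intro z; simpa using (hasDerivAt_id z).const_mul a
    have hexp : ∀ z : ℂ, HasDerivAt (fun w : ℂ => Complex.exp (-c * w^2 / 2))
        (-c * z * Complex.exp (-c * z^2 / 2)) z := by
      intro z
      have h1 : HasDerivAt (fun w : ℂ => -c * w^2 / 2) (-c * z) z := by
        have := ((hasDerivAt_pow 2 z).const_mul (-c)).div_const 2
        simpa using this.congr_deriv (by ring)
      simpa [mul_comm] using h1.cexp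
    have hpoly : ∀ (P : Polynomial ℂ) (z : ℂ),
        HasDerivAt (fun w : ℂ => P.eval (a * w)) (a * P.derivative.eval (a*z)) z := by
      intro P z
      have h := (P.hasDerivAt (a*z)).comp z (hlin z)
      exact h.congr_deriv (mul_comm _ _)
    have he : ∀ z : ℂ, HasDerivAt (fun w : ℂ => H.eval (a*w) * Complex.exp (-c * w^2 / 2))
        (e1 z) z := by
      intro z
      have := (hpoly H z).mul (hexp z)
      rw [he1_def]
      exact this.congr_deriv (by ring)
    have he1 : ∀ z : ℂ, HasDerivAt e1 (e2 z) z := by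
      intro z
      have hp : HasDerivAt (fun w : ℂ => a * H.derivative.eval (a*w) - c * w * H.eval (a*w))
          (a * (a * H.derivative.derivative.eval (a*z))
            - (c * H.eval (a*z) + c * z * (a * H.derivative.eval (a*z)))) z := by
        have h1 := (hpoly H.derivative z).const_mul a
        have h2 : HasDerivAt (fun w : ℂ => c * w * H.eval (a*w))
            (c * H.eval (a*z) + c * z * (a * H.derivative.eval (a*z))) z := by
          have hcw : HasDerivAt (fun w : ℂ => c * w) c z := by
            simpa using (hasDerivAt_id z).const_mul c
          exact (hcw.mul (hpoly H z)).congr_deriv (by ring)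
        exact h1.sub h2
      have := hp.mul (hexp z)
      rw [he2_def]
      exact this.congr_deriv (by ring)
    -- transfer to the real line
    have hdf : deriv f = fun x : ℝ => e1 x := by
      funext x
      rw [hfe]
      exact ((he x).comp_ofReal).deriv
    intro x
    have hddf : deriv (deriv f) x = e2 x := by
      rw [hdf]
      exact ((he1 x).comp_ofReal).deriv
    rw [hddf, hf x]
    -- the Hermite ODE at the point a*x
    have hode : H.derivative.derivative.eval (a*x) - 2 * (a*x) * H.derivative.eval (a*x)
        + 2 * (m:ℂ) * H.eval (a*x) = 0 := by
      have := congrArg (Polynomial.eval (a * (x:ℂ))) hODE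
      simpa [eval_add, eval_sub, eval_mul] using this
    rw [he2_def]
    simp only
    linear_combination (-(Complex.exp (-c * (x:ℂ)^2 / 2)) * c) * hode
      - (H.derivative.derivative.eval (a*x) * Complex.exp (-c * (x:ℂ)^2 / 2)) * ha
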